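/- arXiv:1701.08266 — 2 statements merged into one kernel-verified Lean document; each statement's English description precedes it below -/
import Mathlib

section
/- Fix μ > 0, a = b = 7/2, a positive integer K, and T ∈ ℕ with (T:ℝ) > 2/(K·a − 2). Then the user blocking probability satisfies the strict lower bound P_b(K,T) > P_K(T+1) / ((T+1)·(1−λ)²), where λ = μ/(μ + b). -/
open scoped BigOperators

/-- The distribution of the number of users in the coverage of a cluster of `K` RRUs:
`P_K(n) = b^{Ka} μ^n Γ(n + Ka) / ((μ + b)^{Ka+n} Γ(Ka) n!)` with `a = b = 7/2`. -/
noncomputable def Puser (μ : ℝ) (K : ℕ) (n : ℕ) : ℝ :=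
  (7/2 : ℝ) ^ ((K : ℝ) * (7/2)) * μ ^ n * Real.Gamma ((n : ℝ) + (K : ℝ) * (7/2)) /
    ((μ + 7/2) ^ ((K : ℝ) * (7/2) + (n : ℝ)) * Real.Gamma ((K : ℝ) * (7/2)) *
      (n.factorial : ℝ))

/-- The `n`-th summand of the user blocking probability: `((n − T)/n)·P_K(n)` for
`n ≥ T + 1`, and `0` otherwise. -/
noncomputable def blockTerm (μ : ℝ) (K T : ℕ) (n : ℕ) : ℝ :=
  if T + 1 ≤ n then (((n : ℝ) - (T : ℝ)) / (n : ℝ)) * Puser μ K n else 0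

/-- The user blocking probability `P_b(K,T) = Σ_{n=T+1}^∞ ((n − T)/n)·P_K(n)`. -/
noncomputable def Pblock (μ : ℝ) (K T : ℕ) : ℝ := ∑' n : ℕ, blockTerm μ K T n

/-!
The weights satisfy `P_K(n+1) = λ (n + Ka)/(n + 1) · P_K(n)`, and since `Ka ≥ 7/2`,
`(n + 1)² < n (n + Ka)` for every `n ≥ 1`; hence `P_K(n+1)/(n+1) > λ · P_K(n)/n` for `n ≥ 1`.
Writing `P_b(K,T) = Σ_k (k + 1)·P_K(T+1+k)/(T+1+k)`, the terms dominate
`(k + 1) λ^k P_K(T+1)/(T+1)`, strictly from `k = 1` on, and `Σ_k (k + 1) λ^k = 1/(1 − λ)²`.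
-/

open Filter Topology

section Puser

variable {μ : ℝ} {K : ℕ}

theorem Puser_pos (hμ : 0 < μ) (hK : 0 < K) (n : ℕ) : 0 < Puser μ K n := by
  unfold Puser
  positivity

theorem Puser_succ (hμ : 0 < μ) (hK : 0 < K) (n : ℕ) :
    Puser μ K (n + 1) = μ / (μ + 7/2) * ((n + K * (7/2)) / (n + 1)) * Puser μ K n := by
  have hΓ : Real.Gamma ((n + K * (7/2)) + 1) = (n + K * (7/2)) * Real.Gamma (n + K * (7/2)) :=
    Real.Gamma_add_one (by positivity)
  have hpow : (μ + 7/2) ^ (K * (7/2) + ((n : ℝ) + 1))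
      = (μ + 7/2) ^ (K * (7/2) + (n : ℝ)) * (μ + 7/2) := by
    rw [← add_assoc, Real.rpow_add_one (by positivity)]
  have hΓK : Real.Gamma (K * (7/2)) ≠ 0 := by positivity
  unfold Puser
  rw [Nat.factorial_succ, pow_succ]
  push_cast
  rw [show (n : ℝ) + 1 + K * (7/2) = (n + K * (7/2)) + 1 by ring, hΓ, hpow]
  field_simp

theorem summable_Puser (hμ : 0 < μ) (hK : 0 < K) : Summable (Puser μ K) := by
  have hq : μ / (μ + 7/2) < 1 := (div_lt_one (by positivity)).mpr (by linarith)
  refine summable_of_ratio_test_tendsto_lt_one hq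
    (Eventually.of_forall fun n ↦ (Puser_pos hμ hK n).ne') ?_
  have hratio : ∀ n : ℕ, ‖Puser μ K (n + 1)‖ / ‖Puser μ K n‖
      = μ / (μ + 7/2) * ((K * (7/2) + 1 * n) / (1 + 1 * n)) := by
    intro n
    rw [Real.norm_of_nonneg (Puser_pos hμ hK _).le, Real.norm_of_nonneg (Puser_pos hμ hK _).le,
      Puser_succ hμ hK, mul_div_assoc, div_self (Puser_pos hμ hK n).ne', mul_one]
    ring_nf
  simp_rw [hratio]
  simpa using (tendsto_add_mul_div_add_mul_atTop_nhds (K * (7/2) : ℝ) 1 1 one_ne_zero).const_mul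
    (μ / (μ + 7/2))

theorem mul_Puser_div_lt_Puser_succ_div (hμ : 0 < μ) (hK : 0 < K) {n : ℕ} (hn : 0 < n) :
    μ / (μ + 7/2) * (Puser μ K n / n) < Puser μ K (n + 1) / (n + 1 : ℕ) := by
  have hn1 : (1 : ℝ) ≤ n := by exact_mod_cast hn
  have hK1 : (1 : ℝ) ≤ K := by exact_mod_cast hK
  have hratio : 1 / (n : ℝ) < (n + K * (7/2)) / (n + 1) / (n + 1) := by
    rw [div_div, div_lt_div_iff₀ (by positivity) (by positivity)]
    nlinarith
  have hP := Puser_pos hμ hK n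
  calc μ / (μ + 7/2) * (Puser μ K n / n) = μ / (μ + 7/2) * Puser μ K n * (1 / n) := by ring
    _ < μ / (μ + 7/2) * Puser μ K n * ((n + K * (7/2)) / (n + 1) / (n + 1)) := by
      gcongr
    _ = Puser μ K (n + 1) / (n + 1 : ℕ) := by
      rw [Puser_succ hμ hK]
      push_cast
      ring

theorem pow_mul_Puser_div_le (hμ : 0 < μ) (hK : 0 < K) {m : ℕ} (hm : 0 < m) (k : ℕ) :
    (μ / (μ + 7/2)) ^ k * (Puser μ K m / m) ≤ Puser μ K (m + k) / (m + k : ℕ) := by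
  have hstep := fun j : ℕ ↦
    (mul_Puser_div_lt_Puser_succ_div hμ hK (n := m + j) (by omega)).le
  simpa using geom_le (u := fun j ↦ Puser μ K (m + j) / (m + j : ℕ)) (by positivity) k
    fun j _ ↦ hstep j

theorem hasSum_Pblock (hμ : 0 < μ) (hK : 0 < K) (T : ℕ) :
    HasSum (fun k : ℕ ↦ (k + 1) * (Puser μ K (T + 1 + k) / (T + 1 + k : ℕ))) (Pblock μ K T) := by
  have hterm : ∀ k : ℕ, blockTerm μ K T (T + 1 + k)
      = (k + 1) * (Puser μ K (T + 1 + k) / (T + 1 + k : ℕ)) := by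
    intro k
    rw [blockTerm, if_pos (Nat.le_add_right _ _)]
    push_cast
    ring
  have hterm_le : ∀ k : ℕ,
      (k + 1) * (Puser μ K (T + 1 + k) / (T + 1 + k : ℕ)) ≤ Puser μ K (T + 1 + k) := by
    intro k
    have hP := Puser_pos hμ hK (T + 1 + k)
    rw [← mul_div_assoc, div_le_iff₀ (by positivity), mul_comm]
    gcongr
    push_cast
    linarith [(Nat.cast_nonneg T : (0 : ℝ) ≤ T)]
  have hsummable : Summable (fun k : ℕ ↦ (k + 1) * (Puser μ K (T + 1 + k) / (T + 1 + k : ℕ))) :=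
    ((summable_Puser hμ hK).comp_injective (add_right_injective (T + 1))).of_nonneg_of_le
      (fun k ↦ by have := Puser_pos hμ hK (T + 1 + k); positivity) hterm_le
  convert hsummable.hasSum using 1
  rw [Pblock, ← (add_right_injective (T + 1)).tsum_eq, tsum_congr hterm]
  intro n hn
  have hTn : T + 1 ≤ n := by
    by_contra h
    exact hn (if_neg h)
  exact ⟨n - (T + 1), show T + 1 + (n - (T + 1)) = n by omega⟩

end Puser

theorem Pblock_lower_bound_general (μ : ℝ) (hμ : 0 < μ) (K : ℕ) (hK : 0 < K) (T : ℕ) :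
    Pblock μ K T >
      Puser μ K (T + 1) / (((T : ℝ) + 1) * (1 - μ / (μ + 7/2)) ^ 2) := by
  set q := μ / (μ + 7/2)
  set C := Puser μ K (T + 1) / (T + 1 : ℕ)
  have hq : ‖q‖ < 1 := by
    rw [Real.norm_of_nonneg (by positivity)]
    exact (div_lt_one (by positivity)).mpr (by linarith)
  have hgeom : HasSum (fun k : ℕ ↦ (k + 1) * (q ^ k * C)) (C / (1 - q) ^ 2) := by
    have h := (hasSum_choose_mul_geometric_of_norm_lt_one 1 hq).mul_right C
    simp only [Nat.choose_one_right, Nat.cast_add, Nat.cast_one, one_add_one_eq_two,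
      mul_assoc] at h
    rwa [one_div_mul_eq_div] at h
  have hC : Puser μ K (T + 1) / (((T : ℝ) + 1) * (1 - q) ^ 2) = C / (1 - q) ^ 2 := by
    push_cast [C]
    rw [div_div]
  rw [gt_iff_lt, hC]
  refine hasSum_lt (i := 1) (fun k ↦ ?_) ?_ hgeom (hasSum_Pblock hμ hK T)
  · gcongr
    exact pow_mul_Puser_div_le hμ hK T.succ_pos k
  · simpa [C] using mul_lt_mul_of_pos_left (mul_Puser_div_lt_Puser_succ_div hμ hK T.succ_pos)
      (two_pos (α := ℝ))

/-- strict lower bound on the user blocking probability: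
`P_b(K,T) > P_K(T+1) / ((T+1)(1−λ)²)` with `λ = μ/(μ+b)`. -/
theorem Pblock_lower_bound (μ : ℝ) (hμ : 0 < μ) (K : ℕ) (hK : 0 < K) (T : ℕ)
    (hT : (T : ℝ) > 2 / ((K : ℝ) * (7/2) - 2)) :
    Pblock μ K T >
      Puser μ K (T + 1) / (((T : ℝ) + 1) * (1 - μ / (μ + 7/2)) ^ 2) :=
  Pblock_lower_bound_general μ hμ K hK T
end

section
/- (Weak law of large numbers for the cluster user count) Fix μ > 0 and a = b = 7/2. For every ε > 0, the tail probability of the user-number distribution concentrates: lim_{K→∞} Σ_{n ∈ ℕ, |n − K·μ| > K·ε} P_K(n) = 0, where the limit is over positive integers K tending to infinity. -/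
open scoped BigOperators

/-!
`P_K` is the negative binomial distribution with `r = 7K/2` and `p = μ/(μ + 7/2)`, whose mean
`rp/(1 - p) = Kμ` and variance `rp/(1 - p)² = Kμ(μ + 7/2)/(7/2)` are both linear in `K`, so
Chebyshev's inequality bounds the tail `|n - Kμ| > Kε` by `μ(μ + 7/2)/((7/2)ε²K)`.
The total mass is the binomial series `Σ choose(r + n - 1, n) pⁿ = (1 - p)⁻ʳ`, and the moments
follow by shifting the shape parameter: `n · NB(r, p)(n) = rp/(1 - p) · NB(r + 1, p)(n - 1)`.
-/

open Real Filter
open scoped Nat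

theorem Real.Gamma_add_nat_eq_ascPochhammer_eval_mul {r : ℝ} (hr : 0 < r) (n : ℕ) :
    Gamma (r + n) = (ascPochhammer ℝ n).eval r * Gamma r := by
  induction n with
  | zero => simp
  | succ n ih =>
    rw [Nat.cast_succ, ← add_assoc, Gamma_add_one (by positivity), ih, ascPochhammer_succ_eval]
    ring

theorem Ring.choose_add_natCast_sub_one (r : ℝ) (n : ℕ) :
    Ring.choose (r + n - 1) n = (ascPochhammer ℝ n).eval r / n ! := by
  rw [Ring.choose_eq_smul, Polynomial.descPochhammer_smeval_eq_ascPochhammer,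
    Polynomial.ascPochhammer_smeval_eq_eval, smul_eq_mul, inv_mul_eq_div]
  ring_nf

theorem Real.hasSum_choose_mul_pow (a : ℝ) {x : ℝ} (hx : |x| < 1) :
    HasSum (fun n : ℕ => Ring.choose (a + n - 1) n * x ^ n) ((1 - x) ^ a)⁻¹ := by
  have h := (one_div_one_sub_rpow_hasFPowerSeriesOnBall_zero a).hasSum (y := x)
    (by simpa [enorm_eq_nnnorm, ← NNReal.coe_lt_coe] using hx)
  simpa [FormalMultilinearSeries.ofScalars_apply_eq, mul_comm] using h

noncomputable def negBinomial (r p : ℝ) (n : ℕ) : ℝ :=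
  Gamma (n + r) / (Gamma r * n !) * p ^ n * (1 - p) ^ r

section negBinomial

variable {r p : ℝ}

theorem hasSum_negBinomial (hr : 0 < r) (hp : |p| < 1) : HasSum (negBinomial r p) 1 := by
  have h1p : 0 < 1 - p := by linarith [le_abs_self p]
  have hcoeff (n : ℕ) : negBinomial r p n = Ring.choose (r + n - 1) n * p ^ n * (1 - p) ^ r := by
    rw [negBinomial, Ring.choose_add_natCast_sub_one, add_comm (n : ℝ),
      Gamma_add_nat_eq_ascPochhammer_eval_mul hr, mul_comm (Gamma r),
      mul_div_mul_right _ _ (Gamma_pos_of_pos hr).ne']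
  rw [funext hcoeff]
  simpa [inv_mul_cancel₀ (rpow_pos_of_pos h1p r).ne'] using
    (hasSum_choose_mul_pow r hp).mul_right ((1 - p) ^ r)

theorem succ_mul_negBinomial_succ (hr : 0 < r) (hp : p ≠ 1) (n : ℕ) :
    (n + 1) * negBinomial r p (n + 1) = r * p / (1 - p) * negBinomial (r + 1) p n := by
  have h1p : 1 - p ≠ 0 := sub_ne_zero.mpr hp.symm
  have hG : Gamma r ≠ 0 := (Gamma_pos_of_pos hr).ne'
  have hshift : ((n + 1 : ℕ) : ℝ) + r = n + (r + 1) := by push_cast; ring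
  simp only [negBinomial, hshift, Gamma_add_one hr.ne', rpow_add_one h1p, Nat.factorial_succ]
  push_cast
  field_simp
  ring

theorem hasSum_mul_negBinomial (hr : 0 < r) (hp : |p| < 1) :
    HasSum (fun n : ℕ => n * negBinomial r p n) (r * p / (1 - p)) := by
  have hp1 : p ≠ 1 := by rintro rfl; simp at hp
  have h := (hasSum_negBinomial (by positivity : 0 < r + 1) hp).mul_left (r * p / (1 - p))
  rw [mul_one, ← funext (succ_mul_negBinomial_succ hr hp1)] at h
  rw [← hasSum_nat_add_iff' 1]
  simpa using h

theorem hasSum_mul_sub_one_mul_negBinomial (hr : 0 < r) (hp : |p| < 1) :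
    HasSum (fun n : ℕ => n * (n - 1) * negBinomial r p n) (r * (r + 1) * (p / (1 - p)) ^ 2) := by
  have hp1 : p ≠ 1 := by rintro rfl; simp at hp
  have h := (hasSum_mul_negBinomial (by positivity : 0 < r + 1) hp).mul_left (r * p / (1 - p))
  have hshift (n : ℕ) : r * p / (1 - p) * (n * negBinomial (r + 1) p n)
      = (n + 1) * n * negBinomial r p (n + 1) := by
    rw [mul_right_comm, succ_mul_negBinomial_succ hr hp1]
    ring
  rw [funext hshift, show r * p / (1 - p) * ((r + 1) * p / (1 - p))
    = r * (r + 1) * (p / (1 - p)) ^ 2 by ring] at h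
  rw [← hasSum_nat_add_iff' 1]
  simpa using h

theorem hasSum_sq_sub_mul_negBinomial (hr : 0 < r) (hp : |p| < 1) :
    HasSum (fun n : ℕ => (n - r * p / (1 - p)) ^ 2 * negBinomial r p n)
      (r * p / (1 - p) ^ 2) := by
  have hp1 : 1 - p ≠ 0 := by rw [sub_ne_zero]; rintro rfl; simp at hp
  have h := ((hasSum_mul_sub_one_mul_negBinomial hr hp).add
    ((hasSum_mul_negBinomial hr hp).mul_left (1 - 2 * (r * p / (1 - p))))).add
      ((hasSum_negBinomial hr hp).mul_left ((r * p / (1 - p)) ^ 2))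
  convert h using 1
  · ext n; ring
  · field_simp
    ring

end negBinomial

theorem tsum_ite_lt_abs_sub_le {α : Type*} {P X : α → ℝ} {m δ V : ℝ} (hP : ∀ a, 0 ≤ P a)
    (hδ : 0 < δ) (hV : HasSum (fun a => (X a - m) ^ 2 * P a) V) :
    ∑' a, (if δ < |X a - m| then P a else 0) ≤ V / δ ^ 2 := by
  have hle (a : α) : (if δ < |X a - m| then P a else 0) ≤ (X a - m) ^ 2 * P a / δ ^ 2 := by
    split_ifs with h
    · have hsq : δ ^ 2 ≤ (X a - m) ^ 2 := by
        rw [← sq_abs (X a - m)]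
        exact pow_le_pow_left₀ hδ.le h.le 2
      exact (le_div_iff₀ (by positivity)).2 (by nlinarith [hP a])
    · exact div_nonneg (mul_nonneg (sq_nonneg _) (hP a)) (by positivity)
  have hV' := hV.div_const (δ ^ 2)
  refine (Summable.tsum_le_tsum hle ?_ hV'.summable).trans hV'.tsum_eq.le
  exact hV'.summable.of_nonneg_of_le (fun a => by split_ifs <;> simp [hP a]) hle

theorem Puser_nonneg {μ : ℝ} (hμ : 0 ≤ μ) (K n : ℕ) : 0 ≤ Puser μ K n := by
  have : 0 ≤ Gamma (n + K * (7 / 2)) := Gamma_nonneg_of_nonneg (by positivity)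
  have : 0 ≤ Gamma (K * (7 / 2)) := Gamma_nonneg_of_nonneg (by positivity)
  unfold Puser
  positivity

theorem Puser_eq_negBinomial {μ : ℝ} (hμ : 0 < μ) (K n : ℕ) :
    Puser μ K n = negBinomial (K * (7 / 2)) (μ / (μ + 7 / 2)) n := by
  have hb : 0 < μ + 7 / 2 := by positivity
  have h1p : 1 - μ / (μ + 7 / 2) = (7 / 2) / (μ + 7 / 2) := by field_simp; ring
  rw [Puser, negBinomial, h1p, div_rpow (by norm_num) hb.le, rpow_add hb, rpow_natCast, div_pow]
  field_simp

theorem hasSum_sq_sub_mul_Puser {μ : ℝ} (hμ : 0 < μ) {K : ℕ} (hK : 0 < K) :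
    HasSum (fun n : ℕ => (n - K * μ) ^ 2 * Puser μ K n) (K * μ * (μ + 7 / 2) / (7 / 2)) := by
  have hb : 0 < μ + 7 / 2 := by positivity
  have hp : |μ / (μ + 7 / 2)| < 1 := by
    rw [abs_div, abs_of_pos hμ, abs_of_pos hb, div_lt_one hb]
    linarith
  have h := hasSum_sq_sub_mul_negBinomial (by positivity : (0 : ℝ) < K * (7 / 2)) hp
  have hmean : K * (7 / 2) * (μ / (μ + 7 / 2)) / (1 - μ / (μ + 7 / 2)) = K * μ := by
    field_simp
    ring
  have hvar : K * (7 / 2) * (μ / (μ + 7 / 2)) / (1 - μ / (μ + 7 / 2)) ^ 2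
      = K * μ * (μ + 7 / 2) / (7 / 2) := by
    field_simp
    ring
  simpa only [← Puser_eq_negBinomial hμ, hmean, hvar] using h

/-- weak law of large numbers for the cluster user count:
for every `ε > 0`, `Σ_{n : |n − Kμ| > Kε} P_K(n) → 0` as `K → ∞`. -/
theorem Puser_concentration (μ : ℝ) (hμ : 0 < μ) (ε : ℝ) (hε : 0 < ε) :
    Filter.Tendsto
      (fun K : ℕ =>
        ∑' n : ℕ, if |(n : ℝ) - (K : ℝ) * μ| > (K : ℝ) * ε then Puser μ K n else 0)
      Filter.atTop (nhds 0) := by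
  have hbound : ∀ᶠ K : ℕ in atTop,
      (∑' n : ℕ, if |(n : ℝ) - (K : ℝ) * μ| > (K : ℝ) * ε then Puser μ K n else 0)
        ≤ μ * (μ + 7 / 2) / (7 / 2 * ε ^ 2) * (1 / K) := by
    filter_upwards [eventually_gt_atTop 0] with K hK
    refine (tsum_ite_lt_abs_sub_le (Puser_nonneg hμ.le K) (by positivity)
      (hasSum_sq_sub_mul_Puser hμ hK)).trans_eq ?_
    field_simp
  refine squeeze_zero' (.of_forall fun K => tsum_nonneg fun n => ?_) hbound ?_
  · split_ifs
    exacts [Puser_nonneg hμ.le K n, le_rfl]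
  · simpa only [mul_zero] using
      (tendsto_one_div_atTop_nhds_zero_nat (𝕜 := ℝ)).const_mul (μ * (μ + 7 / 2) / (7 / 2 * ε ^ 2))
end
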